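/- A chord diagram D satisfies X(D) = 0 (no two chords of D cross) if and only if D can be transformed into the empty chord diagram by a finite sequence of deletions of chords whose two endpoints are adjacent on the circle. In particular, every nonempty chord diagram with X(D) = 0 contains a chord whose two endpoints are adjacent. (This is the combinatorial content of the paper's fourth equivalence: a knot projection P satisfies X̃(P) = 0 if and only if P can be related to the simple closed curve by first Reidemeister moves alone.) -/
import Mathlib


/- For this statement we model the circle with `2 * n` points by `Fin (2 * n)` (the
points in their natural cyclic order), so that for `n = 0` we obtain the genuine empty
chord diagram; for `n ≥ 1` this is the same as `ZMod (2 * n)`. -/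

/-- A chord diagram on `2 * n` points: a fixed-point-free involution of the
`2 * n` points of a circle. Its two-element orbits are called chords. -/
structure ChordDiagram (n : ℕ) where
  inv : Fin (2 * n) → Fin (2 * n)
  involutive : Function.Involutive inv
  fixedPointFree : ∀ x, inv x ≠ x

/-- A chord: an unordered pair of points of the circle with `m` points. -/
abbrev Chord (m : ℕ) := Sym2 (Fin m)

/-- The cyclic successor of a point on the circle. -/
def cycSucc {m : ℕ} (i : Fin m) : Fin m :=
  ⟨(i.val + 1) % m, Nat.mod_lt _ i.pos⟩

/-- The cyclic distance from `a` to `b`, counterclockwise. -/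
def cycDist {m : ℕ} (a b : Fin m) : ℕ := (m + b.val - a.val) % m

/-- `x` lies in the open cyclic arc running counterclockwise from `a` to `b`. -/
def InArc {m : ℕ} (a b x : Fin m) : Prop :=
  0 < cycDist a x ∧ cycDist a x < cycDist a b

/-- Two chords cross: exactly one endpoint of the second lies in the open cyclic arc
bounded by the first. -/
def Chord.Crosses {m : ℕ} (e f : Chord m) : Prop :=
  ∃ a b c d : Fin m, e = s(a, b) ∧ f = s(c, d) ∧ Xor' (InArc a b c) (InArc a b d)

/-- The set of chords of a chord diagram. -/
def ChordDiagram.chords {n : ℕ} (D : ChordDiagram n) : Set (Chord (2 * n)) :=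
  {e | ∃ x, e = s(x, D.inv x)}

/-- `P` is an (unordered) pair of crossing chords of `D`. -/
def ChordDiagram.IsCrossingPair {n : ℕ} (D : ChordDiagram n)
    (P : Finset (Chord (2 * n))) : Prop :=
  P.card = 2 ∧ (∀ e ∈ P, e ∈ D.chords) ∧
    ∀ e ∈ P, ∀ f ∈ P, e ≠ f → Chord.Crosses e f

/-- `X D`: the number of unordered pairs of chords of `D` that cross. -/
noncomputable def ChordDiagram.X {n : ℕ} (D : ChordDiagram n) : ℕ :=
  Set.ncard {P | D.IsCrossingPair P}

/-- `D'` is obtained from `D` by deleting the set `S` of chords: deletion removes the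
chords of `S` together with their endpoints and reindexes the remaining points
preserving their cyclic order; in particular it induces a bijection between the
remaining chords of `D` and the chords of `D'` preserving all crossing relations. -/
def ChordDiagram.DeletionOf {n n' : ℕ} (D : ChordDiagram n) (S : Set (Chord (2 * n)))
    (D' : ChordDiagram n') : Prop :=
  ∃ φ : {e : Chord (2 * n) // e ∈ D.chords ∧ e ∉ S} ≃
      {e : Chord (2 * n') // e ∈ D'.chords},
    ∀ e f, Chord.Crosses e.1 f.1 ↔ Chord.Crosses (φ e).1 (φ f).1

/-- The empty chord diagram (the unique chord diagram on `0` points). -/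
def ChordDiagram.empty : ChordDiagram 0 :=
  ⟨fun x => x.elim0, fun x => x.elim0, fun x => x.elim0⟩

/-- `D` can be transformed into the empty chord diagram by a finite sequence of
deletions of chords whose two endpoints are adjacent on the circle (RI moves).
Note that `ChordDiagram 0` is a subsingleton, its unique element being the empty
chord diagram. -/
inductive ChordDiagram.ReducesToEmpty : ∀ {n : ℕ}, ChordDiagram n → Prop
  | empty (D : ChordDiagram 0) : ChordDiagram.ReducesToEmpty D
  | step {n : ℕ} {D : ChordDiagram (n + 1)} {D' : ChordDiagram n}
      (i : Fin (2 * (n + 1)))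
      (hmem : s(i, cycSucc i) ∈ D.chords)
      (hdel : D.DeletionOf {s(i, cycSucc i)} D')
      (h : ChordDiagram.ReducesToEmpty D') : ChordDiagram.ReducesToEmpty D

-- ===== helpers proven in t2/t3 (assumed ok) =====
section helpers
lemma mod3 (a m : ℕ) (hm : 0 < m) (h : a < 3 * m) :
    a % m = if a < m then a else if a < 2 * m then a - m else a - 2 * m := by
  split_ifs with h1 h2
  · exact Nat.mod_eq_of_lt h1
  · rw [Nat.mod_eq_sub_mod (le_of_not_gt h1), Nat.mod_eq_of_lt (by omega)]
  · rw [Nat.mod_eq_sub_mod (le_of_not_gt h1), Nat.mod_eq_sub_mod (by omega),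
      Nat.mod_eq_of_lt (by omega)]
    omega

lemma cycDist_val {m : ℕ} (a b : Fin m) :
    cycDist a b = if a.val ≤ b.val then b.val - a.val else m + b.val - a.val := by
  have ha := a.isLt; have hb := b.isLt
  unfold cycDist
  rw [mod3 _ m a.pos (by omega)]
  split_ifs <;> omega

lemma cycSucc_val {m : ℕ} (i : Fin m) :
    (cycSucc i).val = if i.val + 1 = m then 0 else i.val + 1 := by
  have := i.isLt
  show (i.val + 1) % m = _
  rcases eq_or_ne (i.val + 1) m with h | h
  · simp [h]
  · rw [Nat.mod_eq_of_lt (by omega)]; simp [h]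

lemma cycDist_lt {m : ℕ} (a b : Fin m) : cycDist a b < m := by
  have := a.isLt; have := b.isLt
  rw [cycDist_val]; split_ifs <;> omega

lemma cycDist_eq_zero_iff {m : ℕ} (a x : Fin m) : cycDist a x = 0 ↔ a = x := by
  have := a.isLt; have := x.isLt
  rw [cycDist_val, Fin.ext_iff]; split_ifs <;> omega

lemma cycDist_eq_one {m : ℕ} {i x : Fin m} (h : cycDist i x = 1) : x = cycSucc i := by
  have := i.isLt; have := x.isLt
  rw [cycDist_val] at h
  apply Fin.ext; rw [cycSucc_val]
  split_ifs at h ⊢ <;> omega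

lemma cycDist_succ {m : ℕ} (hm : 2 ≤ m) (i : Fin m) : cycDist i (cycSucc i) = 1 := by
  have := i.isLt
  rw [cycDist_val, cycSucc_val]
  split_ifs <;> omega

lemma cycDist_succ_left {m : ℕ} {i x : Fin m} (h : x.val ≠ i.val) :
    cycDist (cycSucc i) x = cycDist i x - 1 := by
  have := i.isLt; have := x.isLt
  rw [cycDist_val, cycDist_val, cycSucc_val]
  split_ifs <;> omega

lemma cycDist_rev {m : ℕ} (hm : 2 ≤ m) (i : Fin m) : cycDist (cycSucc i) i = m - 1 := by
  have := i.isLt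
  rw [cycDist_val, cycSucc_val]
  split_ifs <;> omega

lemma cycDist_inj {m : ℕ} {i x y : Fin m} (h : cycDist i x = cycDist i y) : x = y := by
  have := i.isLt; have := x.isLt; have := y.isLt
  rw [cycDist_val, cycDist_val] at h
  apply Fin.ext
  split_ifs at h <;> omega

lemma not_inArc_succ {m : ℕ} (i x : Fin m) : ¬ InArc i (cycSucc i) x := by
  have := i.isLt; have := x.isLt
  unfold InArc
  rw [cycDist_val, cycDist_val, cycSucc_val]
  split_ifs <;> omega

lemma inArc_pred {m : ℕ} (hm : 2 ≤ m) {i x : Fin m} (h1 : x ≠ i) (h2 : x ≠ cycSucc i) :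
    InArc (cycSucc i) i x := by
  have := i.isLt; have := x.isLt
  have h1' : x.val ≠ i.val := fun h => h1 (Fin.ext h)
  have h2' : x.val ≠ (cycSucc i).val := fun h => h2 (Fin.ext h)
  rw [cycSucc_val] at h2'
  unfold InArc
  rw [cycDist_val, cycDist_val, cycSucc_val]
  split_ifs at h2' ⊢ <;> omega

def emb {n : ℕ} (i : Fin (2 * (n + 1))) (x : Fin (2 * n)) : Fin (2 * (n + 1)) :=
  ⟨(i.val + 2 + x.val) % (2 * (n + 1)), Nat.mod_lt _ (by omega)⟩

lemma emb_val {n : ℕ} (i : Fin (2 * (n + 1))) (x : Fin (2 * n)) :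
    (emb i x).val = if i.val + 2 + x.val < 2 * (n + 1) then i.val + 2 + x.val
      else i.val + 2 + x.val - 2 * (n + 1) := by
  have := i.isLt; have := x.isLt
  show (i.val + 2 + x.val) % (2 * (n + 1)) = _
  rw [mod3 _ _ (by omega) (by omega)]
  split_ifs <;> omega

lemma emb_inj {n : ℕ} (i : Fin (2 * (n + 1))) : Function.Injective (emb i) := by
  intro x y h
  have hx := x.isLt; have hy := y.isLt; have hi := i.isLt
  have h' := congrArg Fin.val h
  rw [emb_val, emb_val] at h'
  apply Fin.ext
  split_ifs at h' <;> omega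

lemma emb_ne {n : ℕ} (i : Fin (2 * (n + 1))) (x : Fin (2 * n)) :
    emb i x ≠ i ∧ emb i x ≠ cycSucc i := by
  have hx := x.isLt; have hi := i.isLt
  constructor <;> intro h <;> have h' := congrArg Fin.val h <;>
    rw [emb_val] at h'
  · split_ifs at h' <;> omega
  · rw [cycSucc_val] at h'; split_ifs at h' <;> omega

def jval {n : ℕ} (i : Fin (2 * (n + 1))) (z : Fin (2 * (n + 1))) : ℕ :=
  (z.val + 2 * (2 * (n + 1)) - i.val - 2) % (2 * (n + 1))

lemma jval_lt {n : ℕ} {i z : Fin (2 * (n + 1))} (hz1 : z ≠ i) (hz2 : z ≠ cycSucc i) :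
    jval i z < 2 * n := by
  have hz1' : z.val ≠ i.val := fun h => hz1 (Fin.ext h)
  have hz2' : z.val ≠ (cycSucc i).val := fun h => hz2 (Fin.ext h)
  rw [cycSucc_val] at hz2'
  have hi := i.isLt; have hz := z.isLt
  unfold jval
  rw [mod3 _ _ (by omega) (by omega)]
  split_ifs at hz2' ⊢ <;> omega

lemma emb_jval {n : ℕ} {i z : Fin (2 * (n + 1))} (h : jval i z < 2 * n) :
    emb i ⟨jval i z, h⟩ = z := by
  have hi := i.isLt; have hz := z.isLt
  apply Fin.ext
  show (i.val + 2 + jval i z) % (2 * (n + 1)) = z.val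
  unfold jval
  rw [Nat.add_mod_mod]
  have : i.val + 2 + (z.val + 2 * (2 * (n + 1)) - i.val - 2) = z.val + (2 * (n + 1)) * 2 := by
    omega
  rw [this, Nat.add_mul_mod_self_left, Nat.mod_eq_of_lt hz]

lemma inArc_emb {n : ℕ} (i : Fin (2 * (n + 1))) (a b x : Fin (2 * n)) :
    InArc (emb i a) (emb i b) (emb i x) ↔ InArc a b x := by
  have ha := a.isLt; have hb := b.isLt; have hx := x.isLt; have hi := i.isLt
  unfold InArc
  simp only [cycDist_val, emb_val]
  split_ifs <;> omega

lemma crosses_emb {n : ℕ} (i : Fin (2 * (n + 1))) (e f : Sym2 (Fin (2 * n))) :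
    Chord.Crosses (Sym2.map (emb i) e) (Sym2.map (emb i) f) ↔ Chord.Crosses e f := by
  induction e using Sym2.ind with | _ a b =>
  induction f using Sym2.ind with | _ c d =>
  rw [Sym2.map_pair_eq, Sym2.map_pair_eq]
  constructor
  · rintro ⟨a', b', c', d', hab, hcd, hxor⟩
    rw [Sym2.eq_iff] at hab hcd
    rcases hab with ⟨rfl, rfl⟩ | ⟨rfl, rfl⟩ <;> rcases hcd with ⟨rfl, rfl⟩ | ⟨rfl, rfl⟩
    · exact ⟨a, b, c, d, rfl, rfl, by rwa [inArc_emb, inArc_emb] at hxor⟩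
    · exact ⟨a, b, d, c, rfl, Sym2.eq_swap, by rwa [inArc_emb, inArc_emb] at hxor⟩
    · exact ⟨b, a, c, d, Sym2.eq_swap, rfl, by rwa [inArc_emb, inArc_emb] at hxor⟩
    · exact ⟨b, a, d, c, Sym2.eq_swap, Sym2.eq_swap, by rwa [inArc_emb, inArc_emb] at hxor⟩
  · rintro ⟨a', b', c', d', hab, hcd, hxor⟩
    exact ⟨emb i a', emb i b', emb i c', emb i d',
      by simpa [Sym2.map_pair_eq] using congrArg (Sym2.map (emb i)) hab,
      by simpa [Sym2.map_pair_eq] using congrArg (Sym2.map (emb i)) hcd,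
      by rwa [inArc_emb, inArc_emb]⟩
end helpers

-- ===== X characterization =====
lemma X_eq_zero_iff' {n : ℕ} (D : ChordDiagram n) :
    D.X = 0 ↔ ∀ e ∈ D.chords, ∀ f ∈ D.chords, e ≠ f →
      ¬(Chord.Crosses e f ∧ Chord.Crosses f e) := by
  unfold ChordDiagram.X
  rw [Set.ncard_eq_zero (Set.toFinite _), Set.eq_empty_iff_forall_notMem]
  constructor
  · rintro h e he f hf hef ⟨h1, h2⟩
    apply h {e, f}
    refine ⟨Finset.card_pair hef, ?_, ?_⟩
    · intro x hx
      rcases Finset.mem_insert.mp hx with rfl | hx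
      · exact he
      · rw [Finset.mem_singleton.mp hx]; exact hf
    · intro x hx y hy hxy
      simp only [Finset.mem_insert, Finset.mem_singleton] at hx hy
      rcases hx with rfl | rfl <;> rcases hy with rfl | rfl
      · exact absurd rfl hxy
      · exact h1
      · exact h2
      · exact absurd rfl hxy
  · rintro h P ⟨hcard, hmem, hcross⟩
    obtain ⟨e, f, hef, rfl⟩ := Finset.card_eq_two.mp hcard
    exact h e (hmem e (by simp)) f (hmem f (by simp)) hef
      ⟨hcross e (by simp) f (by simp) hef, hcross f (by simp) e (by simp) hef.symm⟩

-- ===== adjacent chords cross nothing =====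
lemma adjacent_not_crosses {m : ℕ} (hm : 2 ≤ m) (i c d : Fin m)
    (hc1 : c ≠ i) (hc2 : c ≠ cycSucc i) (hd1 : d ≠ i) (hd2 : d ≠ cycSucc i) :
    ¬ Chord.Crosses s(i, cycSucc i) s(c, d) := by
  rintro ⟨a, b, c', d', hab, hcd, hxor⟩
  rw [Sym2.eq_iff] at hab hcd
  rcases hab with ⟨rfl, rfl⟩ | ⟨rfl, rfl⟩
  · rcases hxor with ⟨h, -⟩ | ⟨h, -⟩ <;> exact not_inArc_succ _ _ h
  · rcases hcd with ⟨rfl, rfl⟩ | ⟨rfl, rfl⟩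
    · rcases hxor with ⟨-, h⟩ | ⟨-, h⟩
      · exact h (inArc_pred hm hd1 hd2)
      · exact h (inArc_pred hm hc1 hc2)
    · rcases hxor with ⟨-, h⟩ | ⟨-, h⟩
      · exact h (inArc_pred hm hc1 hc2)
      · exact h (inArc_pred hm hd1 hd2)

lemma adjacent_chord_not_crosses {n : ℕ} {D : ChordDiagram n} {i : Fin (2 * n)}
    (hinv : D.inv i = cycSucc i) {f : Chord (2 * n)} (hf : f ∈ D.chords)
    (hne : f ≠ s(i, cycSucc i)) :
    ¬ Chord.Crosses s(i, cycSucc i) f := by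
  obtain ⟨x, rfl⟩ := hf
  have hm : 2 ≤ 2 * n := by have := i.isLt; omega
  have hics : D.inv (cycSucc i) = i := by rw [← hinv, D.involutive]
  have hx1 : x ≠ i := by rintro rfl; exact hne (by rw [hinv])
  have hx2 : x ≠ cycSucc i := by
    rintro rfl; exact hne (by rw [hics]; exact Sym2.eq_swap)
  have hx3 : D.inv x ≠ i := by
    intro h; apply hx2; rw [← hinv, ← h, D.involutive]
  have hx4 : D.inv x ≠ cycSucc i := by
    intro h; apply hx1; rw [← hics, ← h, D.involutive]
  exact adjacent_not_crosses hm i x (D.inv x) hx1 hx2 hx3 hx4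

-- ===== hinv from membership =====
lemma inv_eq_of_mem {n : ℕ} {D : ChordDiagram n} {i : Fin (2 * n)}
    (hmem : s(i, cycSucc i) ∈ D.chords) : D.inv i = cycSucc i := by
  obtain ⟨x, hx⟩ := hmem
  rw [Sym2.eq_iff] at hx
  rcases hx with ⟨rfl, h⟩ | ⟨h1, h2⟩
  · exact h.symm
  · subst h2
    conv_lhs => rw [h1]
    exact D.involutive _

-- ===== existence of a deletion =====
lemma exists_deletion {n : ℕ} (D : ChordDiagram (n + 1)) (i : Fin (2 * (n + 1)))
    (hinv : D.inv i = cycSucc i) :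
    ∃ D' : ChordDiagram n, D.DeletionOf {s(i, cycSucc i)} D' := by
  have hics : D.inv (cycSucc i) = i := by rw [← hinv, D.involutive]
  have hzi : ∀ y : Fin (2 * n),
      D.inv (emb i y) ≠ i ∧ D.inv (emb i y) ≠ cycSucc i := by
    intro y
    constructor
    · intro h
      have h2 := congrArg D.inv h
      rw [D.involutive, hinv] at h2
      exact (emb_ne i y).2 h2
    · intro h
      have h2 := congrArg D.inv h
      rw [D.involutive, hics] at h2
      exact (emb_ne i y).1 h2
  have hlt : ∀ y : Fin (2 * n), jval i (D.inv (emb i y)) < 2 * n := fun y =>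
    jval_lt (hzi y).1 (hzi y).2
  set f : Fin (2 * n) → Fin (2 * n) :=
    fun y => ⟨jval i (D.inv (emb i y)), hlt y⟩ with hf
  have master : ∀ y, emb i (f y) = D.inv (emb i y) := fun y => emb_jval (hlt y)
  have finv : Function.Involutive f := by
    intro y
    apply emb_inj i
    rw [master, master, D.involutive]
  have ffpf : ∀ y, f y ≠ y := by
    intro y h
    have := congrArg (emb i) h
    rw [master] at this
    exact D.fixedPointFree _ this
  refine ⟨⟨f, finv, ffpf⟩, ?_⟩
  set D' : ChordDiagram n := ⟨f, finv, ffpf⟩ with hD'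
  have hψmem : ∀ e : Chord (2 * n), e ∈ D'.chords →
      Sym2.map (emb i) e ∈ D.chords ∧
      Sym2.map (emb i) e ∉ ({s(i, cycSucc i)} : Set (Chord (2 * (n + 1)))) := by
    rintro e ⟨y, rfl⟩
    have : D'.inv y = f y := rfl
    rw [this, Sym2.map_pair_eq, master y]
    refine ⟨⟨emb i y, rfl⟩, ?_⟩
    intro h
    rw [Set.mem_singleton_iff, Sym2.eq_iff] at h
    rcases h with ⟨h1, -⟩ | ⟨h2, -⟩
    · exact (emb_ne i y).1 h1
    · exact (emb_ne i y).2 h2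
  set ψ : {e : Chord (2 * n) // e ∈ D'.chords} →
      {e : Chord (2 * (n + 1)) // e ∈ D.chords ∧ e ∉ ({s(i, cycSucc i)} : Set (Chord (2 * (n + 1))))} :=
    fun e => ⟨Sym2.map (emb i) e.1, hψmem e.1 e.2⟩ with hψ
  have hbij : Function.Bijective ψ := by
    constructor
    · intro e₁ e₂ h
      have := congrArg Subtype.val h
      exact Subtype.ext (Sym2.map.injective (emb_inj i) this)
    · rintro ⟨e, ⟨x, rfl⟩, hS⟩
      rw [Set.mem_singleton_iff] at hS
      have hx1 : x ≠ i := by rintro rfl; exact hS (by rw [hinv])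
      have hx2 : x ≠ cycSucc i := by
        rintro rfl; exact hS (by rw [hics]; exact Sym2.eq_swap)
      set y : Fin (2 * n) := ⟨jval i x, jval_lt hx1 hx2⟩ with hy
      have hey : emb i y = x := emb_jval _
      have hfy : emb i (f y) = D.inv x := by rw [master, hey]
      refine ⟨⟨s(y, f y), ⟨y, rfl⟩⟩, ?_⟩
      apply Subtype.ext
      show Sym2.map (emb i) s(y, f y) = s(x, D.inv x)
      rw [Sym2.map_pair_eq, hey, hfy]
  refine ⟨(Equiv.ofBijective ψ hbij).symm, ?_⟩
  intro e g
  have he : e.1 = Sym2.map (emb i) ((Equiv.ofBijective ψ hbij).symm e).1 := by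
    conv_lhs => rw [← (Equiv.ofBijective ψ hbij).apply_symm_apply e]
    rfl
  have hg : g.1 = Sym2.map (emb i) ((Equiv.ofBijective ψ hbij).symm g).1 := by
    conv_lhs => rw [← (Equiv.ofBijective ψ hbij).apply_symm_apply g]
    rfl

  rw [he, hg, crosses_emb]

-- ===== every crossing-free nonempty diagram has an adjacent chord =====
lemma exists_adjacent {n : ℕ} (hn : 0 < n) (D : ChordDiagram n)
    (h : ∀ e ∈ D.chords, ∀ f ∈ D.chords, e ≠ f →
      ¬(Chord.Crosses e f ∧ Chord.Crosses f e)) :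
    ∃ i, D.inv i = cycSucc i := by
  have hm : 2 ≤ 2 * n := by omega
  obtain ⟨i, -, hmin⟩ := Finset.exists_min_image Finset.univ
    (fun x : Fin (2 * n) => cycDist x (D.inv x)) ⟨⟨0, by omega⟩, Finset.mem_univ _⟩
  refine ⟨i, ?_⟩
  set b := D.inv i with hb
  set d := cycDist i b with hd
  have hd1 : 1 ≤ d := by
    rcases Nat.eq_zero_or_pos d with h0 | h0
    · exact absurd ((cycDist_eq_zero_iff i b).mp h0).symm (D.fixedPointFree i)
    · exact h0
  rcases eq_or_lt_of_le hd1 with h1 | h2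
  · exact cycDist_eq_one h1.symm
  -- d ≥ 2
  set j := cycSucc i with hj
  set k := D.inv j with hk
  have hij : cycDist i j = 1 := cycDist_succ hm i
  have hji : j ≠ i := by
    intro hh; rw [hh] at hij
    exact absurd ((cycDist_eq_zero_iff i i).mpr rfl) (by omega)
  have hjb : j ≠ b := by
    intro hh; rw [← hh] at hd; omega
  have hki : k ≠ i := by
    intro hh
    apply hjb
    rw [hb, ← hh, hk, D.involutive]
  have hbi : b ≠ i := fun hh => D.fixedPointFree i hh
  set t := cycDist i k with ht
  have htpos : 1 ≤ t := by
    rcases Nat.eq_zero_or_pos t with h0 | h0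
    · exact absurd ((cycDist_eq_zero_iff i k).mp h0).symm hki
    · exact h0
  have hjk : cycDist j k = t - 1 := by
    rw [hj]
    exact cycDist_succ_left (fun hh => hki (Fin.ext hh))
  have hmin' : d ≤ cycDist j k := hmin j (Finset.mem_univ _)
  have htd : d < t := by omega
  have hjbd : cycDist j b = d - 1 := by
    rw [hj]
    exact cycDist_succ_left (fun hh => hbi (Fin.ext hh))
  have hjim : cycDist j i = 2 * n - 1 := by rw [hj]; exact cycDist_rev hm i
  have htlt : t < 2 * n := cycDist_lt i k
  -- the two chords cross, contradiction
  have hef : s(i, b) ≠ s(j, k) := by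
    intro hh
    rw [Sym2.eq_iff] at hh
    rcases hh with ⟨h1, -⟩ | ⟨h1, -⟩
    · exact hji h1.symm
    · exact hki h1.symm
  exfalso
  apply h s(i, b) ⟨i, rfl⟩ s(j, k) ⟨j, rfl⟩ hef
  constructor
  · refine ⟨i, b, j, k, rfl, rfl, Or.inl ⟨⟨by omega, by omega⟩, ?_⟩⟩
    rintro ⟨-, hlt2⟩
    omega
  · refine ⟨j, k, b, i, rfl, Sym2.eq_swap, Or.inl ⟨⟨by omega, by omega⟩, ?_⟩⟩
    rintro ⟨-, hlt2⟩
    omega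

-- ===== transfer of X = 0 across deletions =====
lemma X_eq_zero_of_deletionOf {n n' : ℕ} {D : ChordDiagram n} {S : Set (Chord (2 * n))}
    {D' : ChordDiagram n'} (hdel : D.DeletionOf S D') (hX : D.X = 0) : D'.X = 0 := by
  rw [X_eq_zero_iff'] at hX ⊢
  obtain ⟨φ, hφ⟩ := hdel
  intro e' he' f' hf' hef ⟨h1, h2⟩
  set E := φ.symm ⟨e', he'⟩ with hE
  set F := φ.symm ⟨f', hf'⟩ with hF
  have hEe : (φ E).1 = e' := by rw [hE, φ.apply_symm_apply]
  have hFf : (φ F).1 = f' := by rw [hF, φ.apply_symm_apply]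
  apply hX E.1 E.2.1 F.1 F.2.1
  · intro hh
    apply hef
    rw [← hEe, ← hFf]
    congr 1
    exact congrArg φ (Subtype.ext hh)
  · constructor
    · rw [hφ E F, hEe, hFf]; exact h1
    · rw [hφ F E, hEe, hFf]; exact h2

lemma X_eq_zero_of_deletion_adj {n : ℕ} {D : ChordDiagram (n + 1)} {i : Fin (2 * (n + 1))}
    {D' : ChordDiagram n} (hmem : s(i, cycSucc i) ∈ D.chords)
    (hdel : D.DeletionOf {s(i, cycSucc i)} D') (hX' : D'.X = 0) : D.X = 0 := by
  rw [X_eq_zero_iff'] at hX' ⊢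
  obtain ⟨φ, hφ⟩ := hdel
  intro e he f hf hef ⟨h1, h2⟩
  have hinv : D.inv i = cycSucc i := inv_eq_of_mem hmem
  have heS : e ≠ s(i, cycSucc i) := by
    rintro rfl
    exact adjacent_chord_not_crosses hinv hf (fun hh => hef hh.symm) h1
  have hfS : f ≠ s(i, cycSucc i) := by
    rintro rfl
    exact adjacent_chord_not_crosses hinv he hef h2
  set E : {e : Chord (2 * (n + 1)) // e ∈ D.chords ∧ e ∉ ({s(i, cycSucc i)} : Set _)} :=
    ⟨e, he, by simpa using heS⟩ with hE
  set F : {e : Chord (2 * (n + 1)) // e ∈ D.chords ∧ e ∉ ({s(i, cycSucc i)} : Set _)} :=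
    ⟨f, hf, by simpa using hfS⟩ with hF
  apply hX' (φ E).1 (φ E).2 (φ F).1 (φ F).2
  · intro hh
    have : E = F := φ.injective (Subtype.ext hh)
    exact hef (congrArg Subtype.val this)
  · exact ⟨(hφ E F).mp h1, (hφ F E).mp h2⟩

-- ===== main directions =====
lemma reduces_of_X_eq_zero : ∀ (n : ℕ) (D : ChordDiagram n), D.X = 0 → D.ReducesToEmpty := by
  intro n
  induction n with
  | zero => exact fun D _ => ChordDiagram.ReducesToEmpty.empty D
  | succ n ih =>
    intro D hX
    obtain ⟨i, hinv⟩ := exists_adjacent (Nat.succ_pos n) D ((X_eq_zero_iff' D).mp hX)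
    have hmem : s(i, cycSucc i) ∈ D.chords := ⟨i, by rw [hinv]⟩
    obtain ⟨D', hdel⟩ := exists_deletion D i hinv
    exact ChordDiagram.ReducesToEmpty.step i hmem hdel
      (ih D' (X_eq_zero_of_deletionOf hdel hX))

lemma X_eq_zero_of_reduces {n : ℕ} {D : ChordDiagram n} (h : D.ReducesToEmpty) :
    D.X = 0 := by
  induction h with
  | empty D =>
    rw [X_eq_zero_iff']
    rintro e ⟨x, -⟩
    exact x.elim0
  | step i hmem hdel h ih => exact X_eq_zero_of_deletion_adj hmem hdel ih

/-- a chord diagram `D` satisfies `X(D) = 0` (no two chords cross) if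
and only if `D` can be transformed into the empty chord diagram by a finite sequence
of deletions of chords with adjacent endpoints; in particular, every nonempty chord
diagram with `X(D) = 0` contains a chord whose two endpoints are adjacent. -/
theorem X_eq_zero_iff_reduces_to_empty {n : ℕ} (D : ChordDiagram n) :
    (D.X = 0 ↔ D.ReducesToEmpty) ∧
      (0 < n → D.X = 0 → ∃ i : Fin (2 * n), s(i, cycSucc i) ∈ D.chords) := by
  refine ⟨⟨reduces_of_X_eq_zero n D, X_eq_zero_of_reduces⟩, fun hn hX => ?_⟩
  obtain ⟨i, hinv⟩ := exists_adjacent hn D ((X_eq_zero_iff' D).mp hX)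
  exact ⟨i, ⟨i, by rw [hinv]⟩⟩
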